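/- Let f : {-1,1}^n → {-1,1} with ‖f̂‖₁ = L. Then H[f] ≤ (4 log₂ L + 11)·Var(f) + 10·I[f]; in particular H[f] ≤ (4 log₂ L + 21)·I[f]. -/

import Mathlib

open Finset Real

noncomputable def chi {n : ℕ} (S : Finset (Fin n)) (x : Fin n → Bool) : ℝ :=
  ∏ i ∈ S, (if x i then (1:ℝ) else -1)

noncomputable def coeff {n : ℕ} (f : (Fin n → Bool) → ℝ) (S : Finset (Fin n)) : ℝ :=
  (∑ x : Fin n → Bool, f x * chi S x) / 2 ^ n

noncomputable def spectralEntropy {n : ℕ} (f : (Fin n → Bool) → ℝ) : ℝ :=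
  ∑ S : Finset (Fin n), (coeff f S) ^ 2 * Real.logb 2 (1 / (coeff f S) ^ 2)

noncomputable def totalInfluence {n : ℕ} (f : (Fin n → Bool) → ℝ) : ℝ :=
  ∑ S : Finset (Fin n), (S.card : ℝ) * (coeff f S) ^ 2

noncomputable def minEntropy {n : ℕ} (f : (Fin n → Bool) → ℝ) : ℝ :=
  ⨅ S : Finset (Fin n), Real.logb 2 (1 / (coeff f S) ^ 2)

noncomputable def fVar {n : ℕ} (f : (Fin n → Bool) → ℝ) : ℝ := 1 - (coeff f ∅) ^ 2

def IsBoolean {n : ℕ} (f : (Fin n → Bool) → ℝ) : Prop := ∀ x, f x = 1 ∨ f x = -1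

noncomputable def binEnt (x : ℝ) : ℝ :=
  x * Real.logb 2 (1 / x) + (1 - x) * Real.logb 2 (1 / (1 - x))

noncomputable def l1Norm {n : ℕ} (f : (Fin n → Bool) → ℝ) : ℝ :=
  ∑ S : Finset (Fin n), |coeff f S|

noncomputable def tensor {n m : ℕ} (f : (Fin n → Bool) → ℝ) (g : (Fin m → Bool) → ℝ) :
    (Fin (n + m) → Bool) → ℝ :=
  fun x => f (fun i => x (Fin.castAdd m i)) * g (fun j => x (Fin.natAdd n j))

/-!
Write `v = Var(f)` and `L = ‖f̂‖₁`, and measure entropy in nats. Split the spectral entropy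
`∑ f̂(S)² log (1 / f̂(S)²)` at the threshold `θ = (v / 4L)²`. The term `S = ∅` contributes at
most `v`. Since `t² log (1 / t²) ≤ 4 √θ |t|` when `|t| ≤ θ`, the small coefficients contribute
at most `4 √θ L = v`. The remaining ones have `log (1 / f̂(S)²) ≤ log (1 / θ²)` and total mass at
most `v`, so they contribute at most `v log (1 / θ²) = 4 v log (4L) + 4 v log (1 / v)`.
Finally `v log (1 / v) ≤ 2 log 2 · I[f]` is the edge isoperimetric inequality, proved by
induction on the dimension from `H(p) ≥ 2 min(p, 1 - p) log 2`, and `Var(f) ≤ I[f]`.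
-/

section Fourier

variable {n : ℕ}

lemma sum_chi_mul_chi (x y : Fin n → Bool) :
    ∑ S : Finset (Fin n), chi S x * chi S y = if x = y then 2 ^ n else 0 := by
  have hprod : ∀ S : Finset (Fin n), chi S x * chi S y
      = ∏ i ∈ S, (if x i = y i then (1 : ℝ) else -1) := fun S => by
    rw [chi, chi, ← prod_mul_distrib]
    exact prod_congr rfl fun i _ => by cases x i <;> cases y i <;> norm_num
  simp_rw [hprod, ← powerset_univ, ← prod_one_add]
  split_ifs with hxy
  · norm_num [hxy]
  · obtain ⟨i, hi⟩ := Function.ne_iff.1 hxy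
    exact prod_eq_zero (mem_univ i) (by simp [hi])

lemma sum_coeff_mul_chi (f : (Fin n → Bool) → ℝ) (x : Fin n → Bool) :
    ∑ S : Finset (Fin n), coeff f S * chi S x = f x := by
  simp_rw [coeff, div_mul_eq_mul_div, ← sum_div, sum_mul, mul_assoc]
  rw [sum_comm]
  simp_rw [← mul_sum, sum_chi_mul_chi, mul_ite, mul_zero, sum_ite_eq', if_pos (mem_univ x)]
  field_simp

lemma sum_coeff_mul_coeff (f g : (Fin n → Bool) → ℝ) :
    ∑ S : Finset (Fin n), coeff f S * coeff g S = (∑ x, f x * g x) / 2 ^ n := by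
  conv_lhs => enter [2, S]; rw [coeff, div_mul_eq_mul_div, sum_mul]
  rw [← sum_div, sum_comm]
  simp_rw [mul_assoc, ← mul_sum, mul_comm (chi _ _), sum_coeff_mul_chi]

lemma sum_coeff_sq_of_isBoolean {f : (Fin n → Bool) → ℝ} (hf : IsBoolean f) :
    ∑ S : Finset (Fin n), coeff f S ^ 2 = 1 := by
  have hsq : ∀ x, f x * f x = 1 := fun x => by rcases hf x with h | h <;> simp [h]
  simp_rw [sq, sum_coeff_mul_coeff, hsq, sum_const, card_univ, Fintype.card_fun,
    Fintype.card_bool, Fintype.card_fin]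
  simp

end Fourier

section Derivative

variable {n : ℕ}

def flipAt (i : Fin n) (x : Fin n → Bool) : Fin n → Bool :=
  Function.update x i (!x i)

lemma flipAt_involutive (i : Fin n) : Function.Involutive (flipAt i) := fun x => by
  ext j
  rcases eq_or_ne j i with rfl | h <;> simp [flipAt, *]

lemma chi_flipAt (S : Finset (Fin n)) (i : Fin n) (x : Fin n → Bool) :
    chi S (flipAt i x) = (if i ∈ S then -1 else 1) * chi S x := by
  have hsign : ∀ j, (if flipAt i x j then (1 : ℝ) else -1)
      = (if j = i then -1 else 1) * (if x j then 1 else -1) := fun j => by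
    rcases eq_or_ne j i with rfl | h
    · cases h : x j <;> simp [flipAt, h]
    · simp [flipAt, h]
  simp_rw [chi, hsign, prod_mul_distrib, prod_ite_eq' S i]

lemma coeff_comp_flipAt (f : (Fin n → Bool) → ℝ) (i : Fin n) (S : Finset (Fin n)) :
    coeff (fun x => f (flipAt i x)) S = (if i ∈ S then -1 else 1) * coeff f S := by
  rw [coeff, coeff, mul_div_assoc', mul_sum,
    ← Equiv.sum_comp (flipAt_involutive i).toPerm (fun x => f (flipAt i x) * chi S x)]
  congr 1
  refine sum_congr rfl fun x _ => ?_
  simp only [Function.Involutive.coe_toPerm, flipAt_involutive i x, chi_flipAt]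
  ring

noncomputable def discDeriv (f : (Fin n → Bool) → ℝ) (i : Fin n) (x : Fin n → Bool) : ℝ :=
  (f x - f (flipAt i x)) / 2

lemma coeff_discDeriv (f : (Fin n → Bool) → ℝ) (i : Fin n) (S : Finset (Fin n)) :
    coeff (discDeriv f i) S = if i ∈ S then coeff f S else 0 := by
  have hlin : coeff (discDeriv f i) S = (coeff f S - coeff (fun x => f (flipAt i x)) S) / 2 := by
    simp only [coeff, discDeriv, sub_mul, div_mul_eq_mul_div, sum_sub_distrib, ← sum_div]
    ring
  rw [hlin, coeff_comp_flipAt]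
  split_ifs <;> ring

lemma totalInfluence_eq_sum_discDeriv_sq (f : (Fin n → Bool) → ℝ) :
    totalInfluence f = (∑ i, ∑ x, discDeriv f i x ^ 2) / 2 ^ n := by
  have hcard : ∀ S : Finset (Fin n), (#S : ℝ) * coeff f S ^ 2
      = ∑ i, coeff (discDeriv f i) S * coeff (discDeriv f i) S := fun S => by
    simp [coeff_discDeriv, sq]
  rw [totalInfluence, sum_div]
  simp_rw [hcard, sq, ← sum_coeff_mul_coeff]
  exact sum_comm

end Derivative

section EntropyInequalities

lemma two_mul_mul_log_two_le_binEntropy {p : ℝ} (hp₀ : 0 ≤ p) (hp : p ≤ 1 / 2) :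
    2 * p * log 2 ≤ binEntropy p := by
  have h := strictConcave_binEntropy.concaveOn.2 (Set.left_mem_Icc.2 zero_le_one)
    (⟨by norm_num, by norm_num⟩ : (2⁻¹ : ℝ) ∈ Set.Icc 0 1)
    (by linarith : 0 ≤ 1 - 2 * p) (by linarith : 0 ≤ 2 * p) (by ring)
  simp only [smul_eq_mul, mul_zero, zero_add, binEntropy_zero, binEntropy_two_inv] at h
  rwa [show 2 * p * 2⁻¹ = p by ring] at h

lemma negMulLog_add_negMulLog {x y : ℝ} (hxy : 0 < x + y) :
    negMulLog x + negMulLog y = negMulLog (x + y) + (x + y) * binEntropy (x / (x + y)) := by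
  have hx : x / (x + y) * (x + y) = x := div_mul_cancel₀ x hxy.ne'
  have hy : (1 - x / (x + y)) * (x + y) = y := by rw [sub_mul, hx]; ring
  calc negMulLog x + negMulLog y
      = negMulLog (x / (x + y) * (x + y)) + negMulLog ((1 - x / (x + y)) * (x + y)) := by
        rw [hx, hy]
    _ = _ := by
        rw [negMulLog_mul, negMulLog_mul, binEntropy_eq_negMulLog_add_negMulLog_one_sub]
        ring

lemma negMulLog_div_two (x : ℝ) : negMulLog (x / 2) = negMulLog x / 2 + x / 2 * log 2 := by
  rw [div_eq_mul_inv, negMulLog_mul]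
  simp only [negMulLog, log_inv]
  ring

lemma negMulLog_midpoint_le {x y : ℝ} (hx : 0 ≤ x) (hy : 0 ≤ y) :
    negMulLog ((x + y) / 2) ≤ (negMulLog x + negMulLog y) / 2 + |x - y| / 2 * log 2 := by
  wlog hxy : x ≤ y generalizing x y
  · simpa only [add_comm, abs_sub_comm] using this hy hx (le_of_not_ge hxy)
  rcases (add_nonneg hx hy).eq_or_lt with hs | hs
  · obtain ⟨rfl, rfl⟩ : x = 0 ∧ y = 0 := ⟨by linarith, by linarith⟩
    simp
  have hp : x / (x + y) ≤ 1 / 2 := by rw [div_le_iff₀ hs]; linarith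
  have hH := mul_le_mul_of_nonneg_left
    (two_mul_mul_log_two_le_binEntropy (div_nonneg hx hs.le) hp) hs.le
  have hx2 : 2 * (x / (x + y)) * ((x + y) * log 2) = 2 * x * log 2 := by field_simp
  rw [negMulLog_div_two, negMulLog_add_negMulLog hs, abs_of_nonpos (by linarith)]
  linarith

end EntropyInequalities

section EdgeBoundary

variable {n : ℕ}

def edgeBoundary (A : Finset (Fin n → Bool)) : ℕ :=
  ∑ x, ∑ i, if x ∈ A ∧ flipAt i x ∉ A then 1 else 0

lemma edgeBoundary_compl (A : Finset (Fin n → Bool)) : edgeBoundary Aᶜ = edgeBoundary A := by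
  simp only [edgeBoundary]
  rw [sum_comm]
  conv_rhs => rw [sum_comm]
  refine sum_congr rfl fun i _ => ?_
  rw [← Equiv.sum_comp (flipAt_involutive i).toPerm]
  simp only [Function.Involutive.coe_toPerm, flipAt_involutive i _, mem_compl, not_not, and_comm]

lemma sum_cube_succ {M : Type*} [AddCommMonoid M] (F : (Fin (n + 1) → Bool) → M) :
    ∑ x, F x = ∑ b, ∑ y : Fin n → Bool, F (Fin.cons b y) := by
  rw [← Fintype.sum_prod_type', ← Equiv.sum_comp (Fin.consEquiv fun _ => Bool)]
  rfl

lemma flipAt_zero_cons (b : Bool) (y : Fin n → Bool) :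
    flipAt 0 (Fin.cons b y : Fin (n + 1) → Bool) = Fin.cons (!b) y := by
  rw [flipAt, Fin.cons_zero, Fin.update_cons_zero]

lemma flipAt_succ_cons (b : Bool) (y : Fin n → Bool) (j : Fin n) :
    flipAt j.succ (Fin.cons b y : Fin (n + 1) → Bool) = Fin.cons b (flipAt j y) := by
  rw [flipAt, Fin.cons_succ, flipAt, Fin.cons_update]

def cubeSlice (A : Finset (Fin (n + 1) → Bool)) (b : Bool) : Finset (Fin n → Bool) :=
  {y | Fin.cons b y ∈ A}

lemma card_eq_sum_card_cubeSlice (A : Finset (Fin (n + 1) → Bool)) :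
    #A = ∑ b, #(cubeSlice A b) := by
  have hcard : ∀ {m} (s : Finset (Fin m → Bool)), #s = ∑ x, if x ∈ s then 1 else 0 := by simp
  rw [hcard, sum_cube_succ]
  refine sum_congr rfl fun b _ => ?_
  rw [hcard]
  simp [cubeSlice]

lemma edgeBoundary_eq_sum_cubeSlice (A : Finset (Fin (n + 1) → Bool)) :
    edgeBoundary A
      = ∑ b, (edgeBoundary (cubeSlice A b) + #(cubeSlice A b \ cubeSlice A (!b))) := by
  rw [edgeBoundary, sum_cube_succ]
  refine sum_congr rfl fun b _ => ?_
  simp_rw [Fin.sum_univ_succ (n := n), sum_add_distrib, edgeBoundary, add_comm]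
  congr 1
  · simp only [flipAt_zero_cons, sum_boole, Nat.cast_id]
    congr 1
    ext y
    simp [cubeSlice]
  · simp [cubeSlice, flipAt_succ_cons]

lemma abs_card_sub_card_le {α : Type*} [DecidableEq α] (s t : Finset α) :
    |(#s : ℝ) - #t| ≤ #(s \ t) + #(t \ s) := by
  have hs : (#s : ℝ) ≤ #(s \ t) + #t := by exact_mod_cast card_le_card_sdiff_add_card
  have ht : (#t : ℝ) ≤ #(t \ s) + #s := by exact_mod_cast card_le_card_sdiff_add_card
  rw [abs_sub_le_iff]
  constructor <;> linarith [(#(s \ t)).cast_nonneg (α := ℝ), (#(t \ s)).cast_nonneg (α := ℝ)]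

/-- The edge isoperimetric inequality `|A| log (2ⁿ / |A|) ≤ |∂A| log 2`. -/
theorem negMulLog_card_div_le_edgeBoundary :
    ∀ {n : ℕ} (A : Finset (Fin n → Bool)),
      negMulLog (#A / 2 ^ n) ≤ edgeBoundary A * log 2 / 2 ^ n
  | 0, A => by
    obtain h | h := Nat.le_one_iff_eq_zero_or_eq_one.1 (by simpa using card_le_univ A) <;>
      simp [h] <;> positivity
  | n + 1, A => by
    set A₀ := cubeSlice A false
    set A₁ := cubeSlice A true
    have hcard : (#A : ℝ) / 2 ^ (n + 1) = (#A₀ / 2 ^ n + #A₁ / 2 ^ n) / 2 := by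
      rw [card_eq_sum_card_cubeSlice, Fintype.sum_bool, pow_succ]
      push_cast
      ring
    have hedge : (edgeBoundary A : ℝ)
        = edgeBoundary A₀ + edgeBoundary A₁ + (#(A₀ \ A₁) + #(A₁ \ A₀)) := by
      rw [edgeBoundary_eq_sum_cubeSlice, Fintype.sum_bool, Bool.not_true, Bool.not_false]
      push_cast
      ring
    have hdiff : |(#A₀ : ℝ) / 2 ^ n - #A₁ / 2 ^ n| ≤ (#(A₀ \ A₁) + #(A₁ \ A₀)) / 2 ^ n := by
      rw [← sub_div, abs_div, abs_of_pos (by positivity : (0 : ℝ) < 2 ^ n)]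
      exact div_le_div_of_nonneg_right (abs_card_sub_card_le A₀ A₁) (by positivity)
    calc negMulLog (#A / 2 ^ (n + 1))
        ≤ (negMulLog (#A₀ / 2 ^ n) + negMulLog (#A₁ / 2 ^ n)) / 2
            + |(#A₀ : ℝ) / 2 ^ n - #A₁ / 2 ^ n| / 2 * log 2 := by
          rw [hcard]
          apply negMulLog_midpoint_le <;> positivity
      _ ≤ (edgeBoundary A₀ * log 2 / 2 ^ n + edgeBoundary A₁ * log 2 / 2 ^ n) / 2
            + (#(A₀ \ A₁) + #(A₁ \ A₀)) / 2 ^ n / 2 * log 2 := by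
          gcongr
          exacts [negMulLog_card_div_le_edgeBoundary A₀, negMulLog_card_div_le_edgeBoundary A₁]
      _ = edgeBoundary A * log 2 / 2 ^ (n + 1) := by
          rw [hedge, pow_succ]
          ring

end EdgeBoundary

section Boolean

variable {n : ℕ} {f : (Fin n → Bool) → ℝ}

lemma discDeriv_sq_of_isBoolean (hf : IsBoolean f) (i : Fin n) (x : Fin n → Bool) :
    discDeriv f i x ^ 2 = if f x = f (flipAt i x) then 0 else 1 := by
  rcases hf x with h₁ | h₁ <;> rcases hf (flipAt i x) with h₂ | h₂ <;>
    norm_num [discDeriv, h₁, h₂]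

theorem totalInfluence_eq_edgeBoundary (hf : IsBoolean f) :
    totalInfluence f = 2 * edgeBoundary ({x | f x = 1} : Finset _) / 2 ^ n := by
  set A : Finset (Fin n → Bool) := {x | f x = 1}
  have hpoint : ∀ i x, discDeriv f i x ^ 2 = (if x ∈ A ∧ flipAt i x ∉ A then 1 else 0)
      + (if x ∈ Aᶜ ∧ flipAt i x ∉ Aᶜ then 1 else 0) := fun i x => by
    rw [discDeriv_sq_of_isBoolean hf]
    rcases hf x with h₁ | h₁ <;> rcases hf (flipAt i x) with h₂ | h₂ <;> norm_num [A, h₁, h₂]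
  have hcast : ∀ B : Finset (Fin n → Bool),
      (edgeBoundary B : ℝ) = ∑ x, ∑ i, if x ∈ B ∧ flipAt i x ∉ B then 1 else 0 := fun B => by
    simp [edgeBoundary]
  rw [totalInfluence_eq_sum_discDeriv_sq, sum_comm]
  simp_rw [hpoint, sum_add_distrib]
  rw [← hcast, ← hcast, edgeBoundary_compl]
  ring

lemma fVar_eq_of_isBoolean (hf : IsBoolean f) :
    fVar f = 4 * ((#{x | f x = 1} : ℝ) / 2 ^ n) * (1 - #{x | f x = 1} / 2 ^ n) := by
  have hsum : ∑ x, f x = 2 * #{x | f x = 1} - 2 ^ n := by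
    have hpoint : ∀ x, f x = 2 * (if f x = 1 then 1 else 0) - 1 := fun x => by
      rcases hf x with h | h <;> norm_num [h]
    rw [sum_congr rfl fun x _ => hpoint x, sum_sub_distrib, ← mul_sum, sum_boole]
    simp
  have hcoeff : coeff f ∅ = (∑ x, f x) / 2 ^ n := by simp [coeff, chi]
  rw [fVar, hcoeff, hsum]
  field_simp
  ring

lemma fVar_eq_sum_erase (hf : IsBoolean f) : fVar f = ∑ S ∈ univ.erase ∅, coeff f S ^ 2 := by
  rw [fVar, ← sum_coeff_sq_of_isBoolean hf, ← add_sum_erase univ _ (mem_univ ∅),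
    add_sub_cancel_left]

lemma fVar_le_totalInfluence (hf : IsBoolean f) : fVar f ≤ totalInfluence f := by
  calc fVar f = ∑ S ∈ univ.erase ∅, coeff f S ^ 2 := fVar_eq_sum_erase hf
    _ ≤ ∑ S ∈ univ.erase ∅, (#S : ℝ) * coeff f S ^ 2 := sum_le_sum fun S hS =>
        le_mul_of_one_le_left (sq_nonneg _)
          (by exact_mod_cast card_pos.2 (nonempty_iff_ne_empty.2 (ne_of_mem_erase hS)))
    _ ≤ totalInfluence f :=
        sum_le_sum_of_subset_of_nonneg (erase_subset _ _) fun _ _ _ => by positivity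

lemma negMulLog_four_mul_mul_one_sub_le {α : ℝ} (h₀ : 0 ≤ α) (h₁ : α ≤ 1) :
    negMulLog (4 * α * (1 - α)) ≤ 4 * ((1 - α) * negMulLog α + α * negMulLog (1 - α)) := by
  have hlog : 0 < log 4 := log_pos (by norm_num)
  rw [mul_assoc, negMulLog_mul, negMulLog_mul, negMulLog]
  nlinarith [mul_nonneg h₀ (sub_nonneg.2 h₁)]

/-- The paper's `(1/2) Var(f) log₂ (1 / Var(f)) ≤ I[f]`. -/
theorem negMulLog_fVar_le_totalInfluence (hf : IsBoolean f) :
    negMulLog (fVar f) ≤ 2 * log 2 * totalInfluence f := by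
  set A : Finset (Fin n → Bool) := {x | f x = 1}
  set α : ℝ := #A / 2 ^ n
  have hI : log 2 / 2 * totalInfluence f = edgeBoundary A * log 2 / 2 ^ n := by
    rw [totalInfluence_eq_edgeBoundary hf]
    ring
  have hα : negMulLog α ≤ log 2 / 2 * totalInfluence f := by
    rw [hI]
    exact negMulLog_card_div_le_edgeBoundary A
  have hαc : negMulLog (1 - α) ≤ log 2 / 2 * totalInfluence f := by
    have hcompl : (#Aᶜ : ℝ) / 2 ^ n = 1 - α := by
      rw [card_compl, Nat.cast_sub (card_le_univ A)]
      simp [α, sub_div]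
    rw [hI, ← edgeBoundary_compl, ← hcompl]
    exact negMulLog_card_div_le_edgeBoundary Aᶜ
  have hα₀ : 0 ≤ α := by positivity
  have hα₁ : α ≤ 1 := by
    rw [div_le_one (by positivity)]
    exact_mod_cast (card_le_univ A).trans (by simp)
  calc negMulLog (fVar f) ≤ 4 * ((1 - α) * negMulLog α + α * negMulLog (1 - α)) := by
        rw [fVar_eq_of_isBoolean hf]
        exact negMulLog_four_mul_mul_one_sub_le hα₀ hα₁
    _ ≤ 4 * ((1 - α) * (log 2 / 2 * totalInfluence f) + α * (log 2 / 2 * totalInfluence f)) := by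
        gcongr
    _ = 2 * log 2 * totalInfluence f := by ring

end Boolean

section UnitVector

variable {ι : Type*} (a : ι → ℝ)

lemma one_le_sum_abs [Fintype ι] (ha : ∑ i, a i ^ 2 = 1) : 1 ≤ ∑ i, |a i| := by
  rw [← ha]
  refine sum_le_sum fun i _ => ?_
  have h : a i ^ 2 ≤ 1 := ha ▸ single_le_sum (fun j _ => sq_nonneg (a j)) (mem_univ i)
  rw [← sq_abs] at h ⊢
  nlinarith [abs_nonneg (a i)]

lemma negMulLog_sq_le_of_abs_le {r t : ℝ} (hr : 0 ≤ r) (ht : |t| ≤ r ^ 2) :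
    negMulLog (t ^ 2) ≤ 4 * r * |t| := by
  rcases eq_or_ne t 0 with rfl | ht0
  · simp
  set w := √|t|
  have hw : 0 < w := sqrt_pos.2 (abs_pos.2 ht0)
  have hwt : w ^ 2 = |t| := sq_sqrt (abs_nonneg t)
  have hwr : w ≤ r := by simpa [w, sqrt_sq hr] using sqrt_le_sqrt ht
  have hpow : negMulLog (t ^ 2) = 4 * w ^ 3 * negMulLog w := by
    rw [← sq_abs, ← hwt, ← pow_mul]
    simp only [negMulLog, log_pow]
    push_cast
    ring
  have hw1 := negMulLog_le_one_sub_self hw.le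
  rw [hpow, ← hwt]
  nlinarith [mul_le_mul_of_nonneg_left hw1 (by positivity : 0 ≤ 4 * w ^ 3),
    mul_le_mul_of_nonneg_left hwr (by positivity : 0 ≤ 4 * w ^ 2)]

lemma sum_negMulLog_sq_filter_abs_le (s : Finset ι) {r : ℝ} (hr : 0 ≤ r) :
    ∑ i ∈ s with |a i| ≤ r ^ 2, negMulLog (a i ^ 2) ≤ 4 * r * ∑ i ∈ s, |a i| := by
  rw [mul_sum]
  calc ∑ i ∈ s with |a i| ≤ r ^ 2, negMulLog (a i ^ 2)
      ≤ ∑ i ∈ s with |a i| ≤ r ^ 2, 4 * r * |a i| :=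
        sum_le_sum fun i hi => negMulLog_sq_le_of_abs_le hr (mem_filter.1 hi).2
    _ ≤ ∑ i ∈ s, 4 * r * |a i| :=
        sum_le_sum_of_subset_of_nonneg (filter_subset _ _) fun _ _ _ => by positivity

lemma sum_negMulLog_sq_filter_lt (s : Finset ι) {r : ℝ} (hr : 0 < r) (hr₁ : r ≤ 1) :
    ∑ i ∈ s with r ^ 2 < |a i|, negMulLog (a i ^ 2) ≤ 4 * log r⁻¹ * ∑ i ∈ s, a i ^ 2 := by
  have hlog : 0 ≤ log r⁻¹ := log_nonneg (one_le_inv_iff₀.2 ⟨hr, hr₁⟩)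
  rw [mul_sum]
  calc ∑ i ∈ s with r ^ 2 < |a i|, negMulLog (a i ^ 2)
      ≤ ∑ i ∈ s with r ^ 2 < |a i|, 4 * log r⁻¹ * a i ^ 2 := sum_le_sum fun i hi => by
        have hlt : (r ^ 2) ^ 2 < a i ^ 2 := by
          rw [← sq_abs (a i)]
          exact pow_lt_pow_left₀ (mem_filter.1 hi).2 (by positivity) two_ne_zero
        have hlog4 : log ((r ^ 2) ^ 2) = -(4 * log r⁻¹) := by
          rw [← pow_mul, log_pow, log_inv]
          push_cast
          ring
        have hle := mul_le_mul_of_nonneg_left (log_le_log (by positivity) hlt.le) (sq_nonneg (a i))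
        rw [hlog4] at hle
        rw [negMulLog]
        linarith
    _ ≤ ∑ i ∈ s, 4 * log r⁻¹ * a i ^ 2 :=
        sum_le_sum_of_subset_of_nonneg (filter_subset _ _) fun _ _ _ => by positivity

theorem sum_negMulLog_sq_le [Fintype ι] [DecidableEq ι] (ha : ∑ i, a i ^ 2 = 1) (i₀ : ι) :
    ∑ i, negMulLog (a i ^ 2)
      ≤ (2 + 4 * log (4 * ∑ i, |a i|)) * (1 - a i₀ ^ 2) + 4 * negMulLog (1 - a i₀ ^ 2) := by
  have hL := one_le_sum_abs a ha
  set L := ∑ i, |a i|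
  set v := 1 - a i₀ ^ 2
  have hrest : ∑ i ∈ univ.erase i₀, a i ^ 2 = v := by
    linarith [add_sum_erase univ (fun i => a i ^ 2) (mem_univ i₀)]
  have hv₀ : 0 ≤ v := hrest ▸ sum_nonneg fun i _ => sq_nonneg (a i)
  have hv₁ : v ≤ 1 := by linarith [sq_nonneg (a i₀)]
  have h₀ : negMulLog (a i₀ ^ 2) ≤ v := by
    simpa [v] using negMulLog_le_one_sub_self (sq_nonneg (a i₀))
  rw [← add_sum_erase univ _ (mem_univ i₀)]
  rcases hv₀.eq_or_lt with hv | hv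
  · have hzero : ∀ i ∈ univ.erase i₀, a i ^ 2 = 0 :=
      (sum_eq_zero_iff_of_nonneg fun i _ => sq_nonneg (a i)).1 (hrest.trans hv.symm)
    rw [sum_eq_zero fun i hi => by rw [hzero i hi, negMulLog_zero], ← hv]
    simpa [← hv] using h₀
  set r := v / (4 * L)
  have hr : 0 < r := by positivity
  have hr₁ : r ≤ 1 := by rw [div_le_one (by positivity)]; linarith
  have hsmall : ∑ i ∈ univ.erase i₀ with |a i| ≤ r ^ 2, negMulLog (a i ^ 2) ≤ v := by
    refine (sum_negMulLog_sq_filter_abs_le a _ hr.le).trans ?_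
    calc 4 * r * ∑ i ∈ univ.erase i₀, |a i| ≤ 4 * r * L := by
          gcongr
          exact sum_le_sum_of_subset_of_nonneg (erase_subset _ _) fun _ _ _ => abs_nonneg _
      _ = v := by simp only [r]; field_simp
  have hlarge : ∑ i ∈ univ.erase i₀ with ¬|a i| ≤ r ^ 2, negMulLog (a i ^ 2)
      ≤ 4 * log (4 * L) * v + 4 * negMulLog v := by
    simp only [not_le]
    refine (sum_negMulLog_sq_filter_lt a _ hr hr₁).trans_eq ?_
    rw [hrest, inv_div, log_div (by positivity) hv.ne', negMulLog]
    ring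
  rw [← sum_filter_add_sum_filter_not _ (fun i => |a i| ≤ r ^ 2)]
  linarith

end UnitVector

lemma log_four_mul {x : ℝ} (hx : 0 < x) : log (4 * x) = log 2 * (2 + logb 2 x) := by
  rw [log_mul (by norm_num) hx.ne', logb, show (4 : ℝ) = 2 ^ 2 by norm_num, log_pow]
  field_simp
  push_cast
  ring

lemma spectralEntropy_mul_log_two {n : ℕ} (f : (Fin n → Bool) → ℝ) :
    spectralEntropy f * log 2 = ∑ S, negMulLog (coeff f S ^ 2) := by
  rw [spectralEntropy, sum_mul]
  refine sum_congr rfl fun S _ => ?_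
  rw [logb, one_div, log_inv, negMulLog]
  field_simp

theorem FEI_const_l1 {n : ℕ} (f : (Fin n → Bool) → ℝ) (hf : IsBoolean f)
    (L : ℝ) (hL : l1Norm f = L) :
    spectralEntropy f ≤ (4 * Real.logb 2 L + 11) * fVar f + 10 * totalInfluence f ∧
    spectralEntropy f ≤ (4 * Real.logb 2 L + 21) * totalInfluence f := by
  subst hL
  have hparseval := sum_coeff_sq_of_isBoolean hf
  have hlog2 : 2 / 3 < log 2 := by linarith [log_two_gt_d9]
  have hL₁ : 1 ≤ l1Norm f := one_le_sum_abs _ hparseval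
  have hv₀ : 0 ≤ fVar f := fVar_eq_sum_erase hf ▸ sum_nonneg fun S _ => sq_nonneg _
  have hI₀ : 0 ≤ totalInfluence f := sum_nonneg fun S _ => by positivity
  have hfirst :
      spectralEntropy f ≤ (4 * logb 2 (l1Norm f) + 11) * fVar f + 10 * totalInfluence f := by
    refine le_of_mul_le_mul_right ?_ (log_pos one_lt_two)
    calc spectralEntropy f * log 2
        ≤ (2 + 4 * log (4 * l1Norm f)) * fVar f + 4 * negMulLog (fVar f) := by
          rw [spectralEntropy_mul_log_two]
          exact sum_negMulLog_sq_le _ hparseval ∅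
      _ ≤ (2 + 4 * log (4 * l1Norm f)) * fVar f + 8 * log 2 * totalInfluence f := by
          linarith [negMulLog_fVar_le_totalInfluence hf]
      _ ≤ ((4 * logb 2 (l1Norm f) + 11) * fVar f + 10 * totalInfluence f) * log 2 := by
          rw [log_four_mul (by linarith)]
          nlinarith [mul_le_mul_of_nonneg_left hlog2.le hv₀, mul_nonneg hI₀ (log_pos one_lt_two).le]
  have hlogL : 0 ≤ 4 * logb 2 (l1Norm f) + 11 := by linarith [logb_nonneg one_lt_two hL₁]
  refine ⟨hfirst, hfirst.trans ?_⟩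
  nlinarith [mul_le_mul_of_nonneg_left (fVar_le_totalInfluence hf) hlogL]
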